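/- Under the perturbed elliptic singular vector relations with Ũ_kᵀ M Ũ_k = I_k, Ṽ_kᵀ N Ṽ_k = I_k, and E_uᵀ Ũ_k = 0, the perturbation E_P = E_u Ṽ_kᵀ N − M Ũ_k E_vᵀ satisfies the spectral-norm bound ‖M^{−1/2} E_P N^{−1/2}‖ ≤ √(‖M^{−1/2} E_u‖² + ‖N^{−1/2} E_v‖²); in particular, if ‖M^{−1/2} E_u‖ ≤ ε√k and ‖N^{−1/2} E_v‖ ≤ ε√k, then ‖M^{−1/2} E_P N^{−1/2}‖ ≤ ε√(2k). -/

import Mathlib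

open Matrix
open scoped Matrix.Norms.L2Operator

noncomputable def Matrix.PosSemidef.sqrt {n 𝕜 : Type*} [Fintype n] [DecidableEq n] [RCLike 𝕜]
    [PartialOrder 𝕜] {A : Matrix n n 𝕜} (hA : A.PosSemidef) : Matrix n n 𝕜 :=
  hA.1.eigenvectorUnitary.1 * diagonal ((↑) ∘ (√·) ∘ hA.1.eigenvalues) *
  (star hA.1.eigenvectorUnitary : Matrix n n 𝕜)

/-!
Whitening by the square roots `S = M^{1/2}`, `T = N^{1/2}` reduces everything to ordinary
orthonormality: `Q = S Ũ_k` and `P = T Ṽ_k` have orthonormal columns, and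
`M^{-1/2} E_P N^{-1/2} = X Pᵀ - Q Yᵀ` with `X = S⁻¹ E_u`, `Y = T⁻¹ E_v`, where
`XᵀQ = E_uᵀ Ũ_k = 0`. The cross terms of `(X Pᵀ - Q Yᵀ)ᵀ (X Pᵀ - Q Yᵀ)` therefore vanish,
leaving `P XᵀX Pᵀ + Y Yᵀ`, of norm at most `‖X‖² + ‖Y‖²` since `‖P‖ ≤ 1`; the C⋆-identity
`‖Z‖² = ‖ZᵀZ‖` finishes.
-/

namespace Matrix

section L2OpNorm

variable {𝕜 : Type*} [RCLike 𝕜] {m n k : Type*}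

lemma conjTranspose_mul_self_mul_conjTranspose_sub [Fintype m] [Fintype k] [DecidableEq k]
    {X Q : Matrix m k 𝕜} {P Y : Matrix n k 𝕜} (hQ : Qᴴ * Q = 1) (hXQ : Xᴴ * Q = 0) :
    (X * Pᴴ - Q * Yᴴ)ᴴ * (X * Pᴴ - Q * Yᴴ) = P * (Xᴴ * X) * Pᴴ + Y * Yᴴ := by
  have hQX : Qᴴ * X = 0 := by simpa using congrArg conjTranspose hXQ
  calc (X * Pᴴ - Q * Yᴴ)ᴴ * (X * Pᴴ - Q * Yᴴ)
      = P * (Xᴴ * X) * Pᴴ - P * (Xᴴ * Q) * Yᴴ - Y * (Qᴴ * X) * Pᴴ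
          + Y * (Qᴴ * Q) * Yᴴ := by
        simp only [conjTranspose_sub, conjTranspose_mul, conjTranspose_conjTranspose,
          Matrix.sub_mul, Matrix.mul_sub, Matrix.mul_assoc]
        abel
    _ = P * (Xᴴ * X) * Pᴴ + Y * Yᴴ := by
        rw [hXQ, hQX, hQ]
        simp

lemma l2_opNorm_one_le [Fintype k] [DecidableEq k] : ‖(1 : Matrix k k 𝕜)‖ ≤ 1 := by
  rw [← diagonal_one, l2_opNorm_diagonal]
  exact (pi_norm_const_le (1 : 𝕜)).trans norm_one.le

lemma l2_opNorm_mul_conjTranspose_self [Fintype m] [Fintype n] [DecidableEq m] [DecidableEq n]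
    (A : Matrix m n 𝕜) : ‖A * Aᴴ‖ = ‖A‖ ^ 2 := by
  simpa [sq, l2_opNorm_conjTranspose] using l2_opNorm_conjTranspose_mul_self Aᴴ

lemma l2_opNorm_le_one_of_conjTranspose_mul_self_eq_one [Fintype n] [Fintype k] [DecidableEq k]
    {P : Matrix n k 𝕜} (hP : Pᴴ * P = 1) : ‖P‖ ≤ 1 := by
  have h : ‖P‖ * ‖P‖ ≤ 1 := by
    rw [← l2_opNorm_conjTranspose_mul_self, hP]
    exact l2_opNorm_one_le
  nlinarith [norm_nonneg P]

lemma l2_opNorm_mul_mul_conjTranspose_le [Fintype n] [Fintype k]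
    [DecidableEq n] [DecidableEq k] {P : Matrix n k 𝕜} (hP : ‖P‖ ≤ 1) (B : Matrix k k 𝕜) :
    ‖P * B * Pᴴ‖ ≤ ‖B‖ := by
  calc ‖P * B * Pᴴ‖ ≤ ‖P‖ * ‖B‖ * ‖Pᴴ‖ :=
        (l2_opNorm_mul _ _).trans (by gcongr; exact l2_opNorm_mul _ _)
    _ ≤ 1 * ‖B‖ * 1 := by gcongr; rwa [l2_opNorm_conjTranspose]
    _ = ‖B‖ := by ring

theorem l2_opNorm_mul_conjTranspose_sub_mul_conjTranspose_le [Fintype m] [Fintype n] [Fintype k]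
    [DecidableEq n] [DecidableEq k] {X Q : Matrix m k 𝕜} {P Y : Matrix n k 𝕜}
    (hP : Pᴴ * P = 1) (hQ : Qᴴ * Q = 1) (hXQ : Xᴴ * Q = 0) :
    ‖X * Pᴴ - Q * Yᴴ‖ ≤ √(‖X‖ ^ 2 + ‖Y‖ ^ 2) := by
  refine Real.le_sqrt_of_sq_le ?_
  calc ‖X * Pᴴ - Q * Yᴴ‖ ^ 2 = ‖P * (Xᴴ * X) * Pᴴ + Y * Yᴴ‖ := by
        rw [sq, ← l2_opNorm_conjTranspose_mul_self,
          conjTranspose_mul_self_mul_conjTranspose_sub hQ hXQ]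
    _ ≤ ‖Xᴴ * X‖ + ‖Y * Yᴴ‖ := (norm_add_le _ _).trans <| add_le_add_left
        (l2_opNorm_mul_mul_conjTranspose_le
          (l2_opNorm_le_one_of_conjTranspose_mul_self_eq_one hP) _) _
    _ = ‖X‖ ^ 2 + ‖Y‖ ^ 2 := by
        rw [l2_opNorm_conjTranspose_mul_self, l2_opNorm_mul_conjTranspose_self, ← sq]

end L2OpNorm

section Sqrt

variable {n : Type*} [Fintype n] [DecidableEq n] {A : Matrix n n ℝ}

lemma PosSemidef.sqrt_mul_self (hA : A.PosSemidef) : hA.sqrt * hA.sqrt = A := by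
  have hD : diagonal ((↑) ∘ (√·) ∘ hA.1.eigenvalues) *
      diagonal ((↑) ∘ (√·) ∘ hA.1.eigenvalues) =
        diagonal (RCLike.ofReal ∘ hA.1.eigenvalues : n → ℝ) := by
    rw [diagonal_mul_diagonal]
    congr 1
    funext i
    simp [Real.mul_self_sqrt (hA.eigenvalues_nonneg i)]
  conv_rhs => rw [hA.1.spectral_theorem]
  rw [Unitary.conjStarAlgAut_apply, PosSemidef.sqrt, ← hD]
  simp only [Matrix.mul_assoc]
  rw [← Matrix.mul_assoc (star _ : Matrix _ _ ℝ) _ _, Unitary.coe_star_mul_self, Matrix.one_mul]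
  rfl

lemma PosSemidef.transpose_sqrt (hA : A.PosSemidef) : hA.sqrtᵀ = hA.sqrt := by
  simp [PosSemidef.sqrt, transpose_mul, star_eq_conjTranspose,
    conjTranspose_eq_transpose_of_trivial, Matrix.mul_assoc]

lemma PosDef.isUnit_det_sqrt (hA : A.PosDef) : IsUnit hA.posSemidef.sqrt.det := by
  have h := (isUnit_iff_isUnit_det _).1 hA.isUnit
  rw [← hA.posSemidef.sqrt_mul_self, det_mul] at h
  exact (IsUnit.mul_iff.1 h).1

end Sqrt

theorem l2_opNorm_inv_mul_sub_mul_inv_le {m n k : Type*}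
    [Fintype m] [Fintype n] [Fintype k] [DecidableEq m] [DecidableEq n] [DecidableEq k]
    {M : Matrix m m ℝ} {N : Matrix n n ℝ} {S : Matrix m m ℝ} {T : Matrix n n ℝ}
    (hS : Sᵀ = S) (hT : Tᵀ = T) (hSM : S * S = M) (hTN : T * T = N)
    (hS_unit : IsUnit S.det) (hT_unit : IsUnit T.det)
    {U : Matrix m k ℝ} {V : Matrix n k ℝ} (E : Matrix m k ℝ) (F : Matrix n k ℝ)
    (hU : Uᵀ * M * U = 1) (hV : Vᵀ * N * V = 1) (hEU : Eᵀ * U = 0) :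
    ‖S⁻¹ * (E * Vᵀ * N - M * U * Fᵀ) * T⁻¹‖ ≤ √(‖S⁻¹ * E‖ ^ 2 + ‖T⁻¹ * F‖ ^ 2) := by
  subst hSM hTN
  have hS_inv : S⁻¹ * S = 1 := nonsing_inv_mul S hS_unit
  have hT_inv : T * T⁻¹ = 1 := mul_nonsing_inv T hT_unit
  have hwhite : S⁻¹ * (E * Vᵀ * (T * T) - S * S * U * Fᵀ) * T⁻¹ =
      (S⁻¹ * E) * (T * V)ᴴ - (S * U) * (T⁻¹ * F)ᴴ := by
    simp only [conjTranspose_eq_transpose_of_trivial, transpose_mul, transpose_nonsing_inv, hT,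
      Matrix.mul_sub, Matrix.sub_mul, Matrix.mul_assoc, hT_inv, Matrix.mul_one]
    rw [← Matrix.mul_assoc S⁻¹ S, hS_inv, Matrix.one_mul]
  rw [hwhite]
  refine l2_opNorm_mul_conjTranspose_sub_mul_conjTranspose_le ?_ ?_ ?_ <;>
    simp only [conjTranspose_eq_transpose_of_trivial, transpose_mul, transpose_nonsing_inv,
      hS, hT]
  · simpa only [Matrix.mul_assoc] using hV
  · simpa only [Matrix.mul_assoc] using hU
  · rw [Matrix.mul_assoc, ← Matrix.mul_assoc S⁻¹, hS_inv, Matrix.one_mul, hEU]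

end Matrix

lemma sqrt_sq_add_sq_le_sqrt_two_mul {a b c : ℝ} (ha : 0 ≤ a) (hb : 0 ≤ b) (hac : a ≤ c)
    (hbc : b ≤ c) : √(a ^ 2 + b ^ 2) ≤ √2 * c :=
  calc √(a ^ 2 + b ^ 2) ≤ √(2 * c ^ 2) := Real.sqrt_le_sqrt (by nlinarith)
    _ = √2 * c := by rw [Real.sqrt_mul zero_le_two, Real.sqrt_sq (ha.trans hac)]

theorem perturbation_spectral_norm_bound_general (m n k : ℕ)
    (M : Matrix (Fin m) (Fin m) ℝ) (N : Matrix (Fin n) (Fin n) ℝ)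
    (hM : M.PosDef) (hN : N.PosDef)
    (Uk : Matrix (Fin m) (Fin k) ℝ) (Vk : Matrix (Fin n) (Fin k) ℝ)
    (Eu : Matrix (Fin m) (Fin k) ℝ) (Ev : Matrix (Fin n) (Fin k) ℝ)
    (hUk : Ukᵀ * M * Uk = 1) (hVk : Vkᵀ * N * Vk = 1)
    (hEuUk : Euᵀ * Uk = 0)
    (EP : Matrix (Fin m) (Fin n) ℝ) (hEP : EP = Eu * Vkᵀ * N - M * Uk * Evᵀ)
    (Mih : Matrix (Fin m) (Fin m) ℝ) (hMih : Mih = (hM.posSemidef.sqrt)⁻¹)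
    (Nih : Matrix (Fin n) (Fin n) ℝ) (hNih : Nih = (hN.posSemidef.sqrt)⁻¹) :
    ‖Mih * EP * Nih‖ ≤ Real.sqrt (‖Mih * Eu‖ ^ 2 + ‖Nih * Ev‖ ^ 2) ∧
      ∀ ε : ℝ, ‖Mih * Eu‖ ≤ ε * Real.sqrt k → ‖Nih * Ev‖ ≤ ε * Real.sqrt k →
        ‖Mih * EP * Nih‖ ≤ ε * Real.sqrt (2 * k) := by
  subst hEP hMih hNih
  have hbound := l2_opNorm_inv_mul_sub_mul_inv_le hM.posSemidef.transpose_sqrt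
    hN.posSemidef.transpose_sqrt hM.posSemidef.sqrt_mul_self hN.posSemidef.sqrt_mul_self
    hM.isUnit_det_sqrt hN.isUnit_det_sqrt Eu Ev hUk hVk hEuUk
  refine ⟨hbound, fun ε hEu hEv => hbound.trans ?_⟩
  rw [Real.sqrt_mul zero_le_two, mul_left_comm]
  exact sqrt_sq_add_sq_le_sqrt_two_mul (norm_nonneg _) (norm_nonneg _) hEu hEv

/-- Under the perturbed elliptic singular vector relations with `Ũ_kᵀ M Ũ_k = I_k`,
`Ṽ_kᵀ N Ṽ_k = I_k`, and `E_uᵀ Ũ_k = 0`, the perturbation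
`E_P = E_u Ṽ_kᵀ N − M Ũ_k E_vᵀ` satisfies the spectral-norm bound
`‖M^{−1/2} E_P N^{−1/2}‖ ≤ √(‖M^{−1/2} E_u‖² + ‖N^{−1/2} E_v‖²)`; in particular, if
`‖M^{−1/2} E_u‖ ≤ ε√k` and `‖N^{−1/2} E_v‖ ≤ ε√k`, then
`‖M^{−1/2} E_P N^{−1/2}‖ ≤ ε√(2k)`. -/
theorem perturbation_spectral_norm_bound (m n k : ℕ)
    (M : Matrix (Fin m) (Fin m) ℝ) (N : Matrix (Fin n) (Fin n) ℝ)
    (A : Matrix (Fin m) (Fin n) ℝ)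
    (hM : M.PosDef) (hN : N.PosDef)
    (Uk : Matrix (Fin m) (Fin k) ℝ) (Vk : Matrix (Fin n) (Fin k) ℝ)
    (Sigt : Matrix (Fin k) (Fin k) ℝ)
    (hSigDiag : ∀ i j, i ≠ j → Sigt i j = 0)
    (Eu : Matrix (Fin m) (Fin k) ℝ) (Ev : Matrix (Fin n) (Fin k) ℝ)
    (hAV : A * Vk = M * Uk * Sigt + Eu) (hAU : Aᵀ * Uk = N * Vk * Sigt + Ev)
    (hUk : Ukᵀ * M * Uk = 1) (hVk : Vkᵀ * N * Vk = 1)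
    (hEuUk : Euᵀ * Uk = 0)
    (EP : Matrix (Fin m) (Fin n) ℝ) (hEP : EP = Eu * Vkᵀ * N - M * Uk * Evᵀ)
    (Mih : Matrix (Fin m) (Fin m) ℝ) (hMih : Mih = (hM.posSemidef.sqrt)⁻¹)
    (Nih : Matrix (Fin n) (Fin n) ℝ) (hNih : Nih = (hN.posSemidef.sqrt)⁻¹) :
    ‖Mih * EP * Nih‖ ≤ Real.sqrt (‖Mih * Eu‖ ^ 2 + ‖Nih * Ev‖ ^ 2) ∧
      ∀ ε : ℝ, ‖Mih * Eu‖ ≤ ε * Real.sqrt k → ‖Nih * Ev‖ ≤ ε * Real.sqrt k →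
        ‖Mih * EP * Nih‖ ≤ ε * Real.sqrt (2 * k) :=
  perturbation_spectral_norm_bound_general m n k M N hM hN Uk Vk Eu Ev hUk hVk hEuUk EP hEP Mih hMih
    Nih hNih
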